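/- Let k be a field, n ≥ 1, and let 𝔟 be a Borel subalgebra of gl_n(k) containing the diagonal subalgebra 𝔱. Let h ∈ GL_n(k). Then ∑_{𝔟' ∈ B_𝔱} (𝔟' ∩ h𝔟₀h⁻¹) = h𝔟₀h⁻¹, where B_𝔱 is the set of Borel subalgebras of gl_n(k) containing 𝔱 and 𝔟₀ is the upper triangular Borel subalgebra. Equivalently, every conjugate of 𝔟₀ is spanned by its intersections with the n! Borel subalgebras containing the diagonal torus. -/

import Mathlib

open Matrix

/-- The Borel subalgebra of upper triangular matrices, as a `k`-submodule of `gl_n(k)`. -/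
def borel0 (k : Type*) [Field k] (n : ℕ) : Submodule k (Matrix (Fin n) (Fin n) k) where
  carrier := {M | ∀ i j : Fin n, j < i → M i j = 0}
  add_mem' := by intro a b ha hb i j hij; simp [Matrix.add_apply, ha i j hij, hb i j hij]
  zero_mem' := by intro i j hij; simp
  smul_mem' := by intro c a ha i j hij; simp [Matrix.smul_apply, ha i j hij]

/-- Conjugation `A ↦ g⁻¹ A g` as a `k`-linear endomorphism of `gl_n(k)`. -/
noncomputable def conjMap (k : Type*) [Field k] (n : ℕ) (g : Matrix (Fin n) (Fin n) k) :
    Matrix (Fin n) (Fin n) k →ₗ[k] Matrix (Fin n) (Fin n) k :=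
  (LinearMap.mulLeft k g⁻¹).comp (LinearMap.mulRight k g)

/-- `𝔟_g = g⁻¹ 𝔟₀ g`, the conjugate Borel subalgebra. -/
noncomputable def borelConj (k : Type*) [Field k] (n : ℕ) (g : Matrix (Fin n) (Fin n) k) :
    Submodule k (Matrix (Fin n) (Fin n) k) :=
  (borel0 k n).map (conjMap k n g)


/-- The Borel subalgebra `h 𝔟₀ h⁻¹`. -/
noncomputable def borelPos (k : Type*) [Field k] (n : ℕ) (h : Matrix (Fin n) (Fin n) k) :
    Submodule k (Matrix (Fin n) (Fin n) k) :=
  (borel0 k n).map ((LinearMap.mulLeft k h).comp (LinearMap.mulRight k h⁻¹))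

/-!
Let `F i` be the span of the first `i` columns of `h`; then `h𝔟₀h⁻¹` is spanned by the rank-one
matrices `vecMulVec (h.col i) ψ` with `ψ` vanishing on `F i`. A rank-one matrix `vecMulVec v ψ`
lies in a Borel subalgebra containing `𝔱` as soon as the supports of `v` and `ψ` meet in at most
one coordinate `t`: order the coordinates so that the support of `v` comes first, then `t`, then
the support of `ψ`. To reach such matrices, pick coordinates `s` whose basis vectors span a
complement of `F i` and project onto that complement along `F i`. The column `h.col i` becomes a
vector supported on `s` plus an element of `F i`, which is handled by induction on `i`, and every
`ψ` vanishing on `F i` is a combination of the rows of the projection, each of which meets `s`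
in a single coordinate.
-/

theorem Submodule.exists_isCompl_span_image {K V ι : Type*} [DivisionRing K] [AddCommGroup V]
    [Module K V] (p : Submodule K V) {e : ι → V} (he : span K (Set.range e) = ⊤) :
    ∃ s : Set ι, IsCompl p (span K (e '' s)) := by
  obtain ⟨s, -, -, hspan, hli⟩ := exists_linearIndepOn_extension (v := p.mkQ ∘ e)
    (linearIndepOn_empty K _) (Set.empty_subset Set.univ)
  refine ⟨s, ?_, ?_⟩
  · have := Submodule.range_ker_disjoint hli
    rw [ker_mkQ, ← Set.image_eq_range] at this
    exact this.symm
  · rw [codisjoint_iff, ← map_mkQ_eq_top, map_span, ← Set.image_comp, eq_top_iff]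
    calc ⊤ = map p.mkQ (span K (Set.range e)) := by rw [he, map_top, range_mkQ]
      _ = span K (p.mkQ ∘ e '' Set.univ) := by rw [map_span, Set.image_univ, Set.range_comp]
      _ ≤ _ := span_le.mpr hspan

section

variable {k : Type*} [Field k] {n : ℕ}

theorem apply_eq_zero_of_mem_span_basisFun_image {ι : Type*} [Finite ι] {s : Set ι}
    {x : ι → k} (hx : x ∈ Submodule.span k (Pi.basisFun k ι '' s)) {r : ι} (hr : r ∉ s) :
    x r = 0 := by
  classical
  suffices Pi.basisFun k ι '' s ⊆ LinearMap.ker (LinearMap.proj (R := k) (φ := fun _ => k) r) from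
    Submodule.span_le.mpr this hx
  rintro _ ⟨r', hr', rfl⟩
  simp [show r ≠ r' from fun e => hr (e ▸ hr')]

theorem eq_sum_smul_row_toMatrix' {ι : Type*} [Fintype ι] [DecidableEq ι]
    {F : Submodule k (ι → k)} {π : (ι → k) →ₗ[k] ι → k} (hπ : ∀ x, x - π x ∈ F) {ψ : ι → k}
    (hψ : ∀ f ∈ F, ψ ⬝ᵥ f = 0) :
    ψ = ∑ t, ψ t • LinearMap.toMatrix' π t := by
  rw [← vecMul_eq_sum]
  ext r
  have := hψ _ (hπ (Pi.single r 1))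
  rwa [dotProduct_sub, sub_eq_zero, dotProduct_single_one, ← LinearMap.toMatrix'_mulVec,
    dotProduct_mulVec, dotProduct_single_one] at this

theorem conjMap_permMatrix (σ : Equiv.Perm (Fin n)) (M : Matrix (Fin n) (Fin n) k) :
    conjMap k n (σ.permMatrix k) M = M.submatrix σ.symm σ.symm := by
  have hinv : (σ.permMatrix k)⁻¹ = σ⁻¹.permMatrix k :=
    inv_eq_left_inv (by rw [← Matrix.permMatrix_mul]; simp)
  simp [conjMap, hinv, Equiv.Perm.permMatrix, PEquiv.toMatrix_toPEquiv_mul,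
    PEquiv.mul_toMatrix_toPEquiv]

theorem mem_borelConj_permMatrix_iff (σ : Equiv.Perm (Fin n)) (X : Matrix (Fin n) (Fin n) k) :
    X ∈ borelConj k n (σ.permMatrix k) ↔ ∀ a b, b < a → X (σ a) (σ b) = 0 := by
  refine ⟨?_, fun hX => ⟨X.submatrix σ σ, hX, ?_⟩⟩
  · rintro ⟨M, hM, rfl⟩ a b hba
    simpa [conjMap_permMatrix] using hM a b hba
  · ext; simp [conjMap_permMatrix]

theorem exists_perm_vecMulVec_mem_borelConj {v ψ : Fin n → k} (t : Fin n)
    (hvψ : ∀ r, v r ≠ 0 → ψ r ≠ 0 → r = t) :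
    ∃ σ : Equiv.Perm (Fin n), vecMulVec v ψ ∈ borelConj k n (σ.permMatrix k) := by
  classical
  -- Sorting by `rank` lists the support of `v` first, then `t`, then the support of `ψ`.
  let rank : Fin n → ℕ := fun r => if r = t then 1 else if v r ≠ 0 then 0 else 2
  set σ := Tuple.sort rank
  refine ⟨σ, (mem_borelConj_permMatrix_iff σ _).mpr fun a b hba => ?_⟩
  have hsorted : rank (σ b) ≤ rank (σ a) := Tuple.monotone_sort rank hba.le
  by_contra hne
  obtain ⟨hva, hψb⟩ : v (σ a) ≠ 0 ∧ ψ (σ b) ≠ 0 := by simpa [vecMulVec_apply, not_or] using hne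
  have hab : σ a ≠ σ b := σ.injective.ne hba.ne'
  have hra : rank (σ a) ≤ 1 := by simp only [rank]; split_ifs <;> simp_all
  by_cases hb : σ b = t
  · have hat : σ a ≠ t := hb ▸ hab
    simp [rank, hb, hat, hva] at hsorted
  · have hvb : v (σ b) = 0 := by_contra fun hvb => hb (hvψ _ hvb hψb)
    have hrb : rank (σ b) = 2 := by simp [rank, hb, hvb]
    omega

theorem vecMulVec_mem_borelPos {h : Matrix (Fin n) (Fin n) k} (hh : IsUnit h) {i : Fin n}
    {v ψ : Fin n → k} (hv : v ∈ Submodule.span k (h.col '' Set.Iic i))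
    (hψ : ∀ c < i, (ψ ᵥ* h) c = 0) :
    vecMulVec v ψ ∈ borelPos k n h := by
  suffices h.col '' Set.Iic i ⊆ (borelPos k n h).comap ((vecMulVecBilin k k).flip ψ) from
    Submodule.span_le.mpr this hv
  rintro _ ⟨c, hc, rfl⟩
  refine ⟨vecMulVec (Pi.single c 1) (ψ ᵥ* h), fun a b hba => ?_, ?_⟩
  · rw [vecMulVec_apply, Pi.single_apply]
    split_ifs with hac
    · rw [hψ b (hac ▸ hba |>.trans_le hc), mul_zero]
    · rw [zero_mul]
  · have hdet : IsUnit h.det := (isUnit_iff_isUnit_det h).mp hh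
    simp [mul_vecMulVec, vecMulVec_mul, vecMul_vecMul, mul_nonsing_inv _ hdet]

theorem borelPos_le_of_forall_vecMulVec_col_mem {h : Matrix (Fin n) (Fin n) k} (hh : IsUnit h)
    {S : Submodule k (Matrix (Fin n) (Fin n) k)}
    (hS : ∀ i ψ, (∀ c < i, (ψ ᵥ* h) c = 0) → vecMulVec (h.col i) ψ ∈ S) :
    borelPos k n h ≤ S := by
  rintro _ ⟨M, hM, rfl⟩
  have hdet : IsUnit h.det := (isUnit_iff_isUnit_det h).mp hh
  have hrows : M = ∑ i, vecMulVec (Pi.single i 1) (M i) := by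
    ext a b; simp [vecMulVec_apply, Matrix.sum_apply, Pi.single_apply]
  have : (LinearMap.mulLeft k h ∘ₗ LinearMap.mulRight k h⁻¹) M
      = ∑ i, vecMulVec (h.col i) (M i ᵥ* h⁻¹) := by
    conv_lhs => rw [hrows]
    simp [mul_vecMulVec, vecMulVec_mul]
  rw [this]
  refine Submodule.sum_mem _ fun i _ => hS i _ fun c hc => ?_
  rw [vecMul_vecMul, nonsing_inv_mul _ hdet, vecMul_one]
  exact hM i c hc

theorem vecMulVec_projection_col_mem {h : Matrix (Fin n) (Fin n) k} (hh : IsUnit h)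
    {S : Submodule k (Matrix (Fin n) (Fin n) k)}
    (hS : ∀ (v ψ : Fin n → k) (t : Fin n), (∀ r, v r ≠ 0 → ψ r ≠ 0 → r = t) →
      vecMulVec v ψ ∈ borelPos k n h → vecMulVec v ψ ∈ S)
    {i : Fin n} {s : Set (Fin n)}
    (hs : IsCompl (Submodule.span k (Pi.basisFun k (Fin n) '' s))
      (Submodule.span k (h.col '' Set.Iio i)))
    {ψ : Fin n → k} (hψ : ∀ c < i, (ψ ᵥ* h) c = 0) :
    vecMulVec (Submodule.projection _ _ hs (h.col i)) ψ ∈ S := by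
  set F := Submodule.span k (h.col '' Set.Iio i)
  set π := Submodule.projection _ _ hs
  have hπ : ∀ x, x - π x ∈ F := Submodule.sub_projection_mem hs
  have hψF : ∀ f ∈ F, ψ ⬝ᵥ f = 0 := by
    suffices h.col '' Set.Iio i ⊆ LinearMap.ker (dotProductBilin k k ψ) from
      fun f hf => Submodule.span_le.mpr this hf
    rintro _ ⟨c, hc, rfl⟩
    exact hψ c hc
  rw [eq_sum_smul_row_toMatrix' hπ hψF]
  change vecMulVecBilin k k (π (h.col i)) _ ∈ S
  rw [map_sum]
  refine Submodule.sum_mem _ fun t _ => ?_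
  rw [map_smul]
  refine Submodule.smul_mem _ _ (hS _ _ t (fun r hr ht => ?_) ?_)
  · have hrs : r ∈ s := by_contra fun hrs =>
      hr (apply_eq_zero_of_mem_span_basisFun_image (Submodule.projection_apply_mem _ _) hrs)
    have : π (Pi.single r 1) = Pi.single r 1 :=
      Submodule.projection_apply_of_mem_left _ (Submodule.subset_span ⟨r, hrs, by simp⟩)
    by_contra hrt
    exact ht (by simp [this, Ne.symm hrt])
  · refine vecMulVec_mem_borelPos hh (i := i) ?_ fun c hc => ?_
    · have hF : F ≤ Submodule.span k (h.col '' Set.Iic i) :=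
        Submodule.span_mono (Set.image_mono Set.Iio_subset_Iic_self)
      rw [← sub_sub_cancel (h.col i) (π (h.col i))]
      exact sub_mem (Submodule.subset_span (Set.mem_image_of_mem _ (Set.mem_Iic.mpr le_rfl)))
        (hF (hπ _))
    · have hπc : π (h.col c) = 0 := (Submodule.projection_apply_eq_zero_iff _).mpr
        (Submodule.subset_span (Set.mem_image_of_mem _ hc))
      calc (LinearMap.toMatrix' π t ᵥ* h) c = (LinearMap.toMatrix' π *ᵥ h.col c) t := rfl
        _ = 0 := by rw [LinearMap.toMatrix'_mulVec, hπc, Pi.zero_apply]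

theorem borelPos_le_of_forall_vecMulVec_mem {h : Matrix (Fin n) (Fin n) k} (hh : IsUnit h)
    {S : Submodule k (Matrix (Fin n) (Fin n) k)}
    (hS : ∀ (v ψ : Fin n → k) (t : Fin n), (∀ r, v r ≠ 0 → ψ r ≠ 0 → r = t) →
      vecMulVec v ψ ∈ borelPos k n h → vecMulVec v ψ ∈ S) :
    borelPos k n h ≤ S := by
  refine borelPos_le_of_forall_vecMulVec_col_mem hh fun i => ?_
  induction i using WellFoundedLT.induction with | _ i ih => ?_
  intro ψ hψ
  obtain ⟨s, hs⟩ := (Submodule.span k (h.col '' Set.Iio i)).exists_isCompl_span_image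
    (Pi.basisFun k (Fin n)).span_eq
  set π := Submodule.projection _ _ hs.symm
  have hlow : vecMulVec (h.col i - π (h.col i)) ψ ∈ S := by
    suffices h.col '' Set.Iio i ⊆ S.comap ((vecMulVecBilin k k).flip ψ) from
      Submodule.span_le.mpr this (Submodule.sub_projection_mem hs.symm _)
    rintro _ ⟨c, hc, rfl⟩
    exact ih c hc ψ fun c' hc' => hψ c' (hc'.trans hc)
  have := add_mem (vecMulVec_projection_col_mem hh hS hs.symm hψ) hlow
  rwa [← add_vecMulVec, add_sub_cancel] at this

end

theorem envelope_over_torus_borels_general (k : Type*) [Field k] (n : ℕ)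
    (h : Matrix (Fin n) (Fin n) k) (hh : IsUnit h) :
    (⨆ b ∈ {S : Submodule k (Matrix (Fin n) (Fin n) k) |
              ∃ w : Equiv.Perm (Fin n), S = borelConj k n (Equiv.Perm.permMatrix k w)},
        (b ⊓ borelPos k n h))
      = borelPos k n h := by
  refine le_antisymm (iSup₂_le fun _ _ => inf_le_right) ?_
  refine borelPos_le_of_forall_vecMulVec_mem hh fun v ψ t hvψ hv => ?_
  obtain ⟨σ, hσ⟩ := exists_perm_vecMulVec_mem_borelConj t hvψ
  exact le_biSup (fun b => b ⊓ borelPos k n h)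
    (⟨σ, rfl⟩ : ∃ w : Equiv.Perm (Fin n), _ = borelConj k n (w.permMatrix k)) ⟨hσ, hv⟩

/-- Every conjugate `h𝔟₀h⁻¹` of the standard Borel is spanned by its intersections with the
`n!` Borel subalgebras containing the diagonal subalgebra `𝔱`, namely the `w⁻¹𝔟₀w` for
`w ∈ S_n`:  `∑_{𝔟' ∈ B_𝔱} (𝔟' ∩ h𝔟₀h⁻¹) = h𝔟₀h⁻¹`. -/
theorem envelope_over_torus_borels (k : Type*) [Field k] (n : ℕ) (hn : 0 < n)
    (h : Matrix (Fin n) (Fin n) k) (hh : IsUnit h) :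
    (⨆ b ∈ {S : Submodule k (Matrix (Fin n) (Fin n) k) |
              ∃ w : Equiv.Perm (Fin n), S = borelConj k n (Equiv.Perm.permMatrix k w)},
        (b ⊓ borelPos k n h))
      = borelPos k n h :=
  envelope_over_torus_borels_general k n h hh
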